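/- There exists a constant C₁ > 0 such that for every A ≥ 1, choosing γ = C₁·A, the tail series ∑_{k = ⌈γ²⌉}^{∞} A^{k/γ} · k^{k/γ} / k! is at most 1. In particular it suffices that (A^{1/γ} k^{1/γ} e / k)^k ≤ 2^{−k} for all k ≥ γ², which follows from Stirling's lower bound k! ≥ (k/e)^k. -/
import Mathlib
set_option maxHeartbeats 1000000

/-- Stirling lower bound: `(n/e)^n ≤ n!`. -/
lemma pow_div_exp_le_factorial (n : ℕ) :
    ((n : ℝ) / Real.exp 1) ^ n ≤ (Nat.factorial n : ℝ) := by
  have h := Real.pow_div_factorial_le_exp (x := (n : ℝ)) (Nat.cast_nonneg n) n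
  have hfac : (0 : ℝ) < (Nat.factorial n : ℝ) := by positivity
  have hn : (n : ℝ) ^ n ≤ (Nat.factorial n : ℝ) * Real.exp (n : ℝ) := by
    rw [div_le_iff₀ hfac] at h
    linarith [h]
  have hexp_pow : Real.exp ((n : ℝ)) = (Real.exp 1) ^ n := by
    rw [← Real.exp_nat_mul]; ring_nf
  rw [div_pow, div_le_iff₀ (by positivity)]
  calc ((n : ℝ)) ^ n ≤ (Nat.factorial n : ℝ) * Real.exp (n : ℝ) := hn
    _ = (Nat.factorial n : ℝ) * (Real.exp 1) ^ n := by rw [hexp_pow]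

/-- Per-term bound: if `6 ≤ γ`, `1 ≤ A`, `γ² ≤ n`, and `A ≤ n`, then
`A^(n/γ) n^(n/γ) / n! ≤ (1/2)^n`. -/
lemma term_bound (A γ : ℝ) (n : ℕ) (hA : 1 ≤ A) (hγ : 6 ≤ γ)
    (hγ2x : γ ^ 2 ≤ (n : ℝ)) (hAx : A ≤ (n : ℝ)) :
    A ^ ((n : ℝ) / γ) * (n : ℝ) ^ ((n : ℝ) / γ) / (Nat.factorial n : ℝ)
      ≤ (1 / 2 : ℝ) ^ n := by
  have hγpos : (0 : ℝ) < γ := by linarith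
  have hA0 : (0 : ℝ) < A := by linarith
  set x : ℝ := (n : ℝ) with hxdef
  have hx36 : (36 : ℝ) ≤ x := by nlinarith
  have hx0 : (0 : ℝ) < x := by linarith
  have hx1 : (1 : ℝ) ≤ x := by linarith
  have hfac : (0 : ℝ) < (Nat.factorial n : ℝ) := by positivity
  have hxγ : (0 : ℝ) ≤ x / γ := by positivity
  have h1 : A ^ (x / γ) * x ^ (x / γ) = (A * x) ^ (x / γ) :=
    (Real.mul_rpow hA0.le hx0.le).symm
  have h2 : (A * x) ^ (x / γ) ≤ (x ^ (2 : ℝ)) ^ (x / γ) := by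
    apply Real.rpow_le_rpow (by positivity) _ hxγ
    rw [Real.rpow_two]
    nlinarith
  have h3 : (x ^ (2 : ℝ)) ^ (x / γ) = (x ^ ((2 : ℝ) / γ)) ^ (x : ℝ) := by
    rw [← Real.rpow_mul hx0.le, ← Real.rpow_mul hx0.le]
    congr 1
    ring
  have he : Real.exp 1 < 2.7182818286 := Real.exp_one_lt_d9
  have hbase : x ^ ((2 : ℝ) / γ) ≤ x / (2 * Real.exp 1) := by
    have h23 : x ^ ((2 : ℝ) / γ) ≤ x ^ ((1 : ℝ) / 3) := by
      apply Real.rpow_le_rpow_of_exponent_le hx1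
      rw [div_le_div_iff₀ hγpos (by norm_num)]
      linarith
    have h2e : 2 * Real.exp 1 ≤ x ^ ((2 : ℝ) / 3) := by
      have h36 : (36 : ℝ) ^ ((2 : ℝ) / 3) ≤ x ^ ((2 : ℝ) / 3) :=
        Real.rpow_le_rpow (by norm_num) hx36 (by norm_num)
      have h6 : (6 : ℝ) ≤ (36 : ℝ) ^ ((2 : ℝ) / 3) := by
        have h62 : (6 : ℝ) = (36 : ℝ) ^ ((1 : ℝ) / 2) := by
          rw [show (36 : ℝ) = 6 ^ (2 : ℕ) by norm_num,
            ← Real.rpow_natCast (6 : ℝ) 2, ← Real.rpow_mul (by norm_num)]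
          norm_num
        rw [h62]
        exact Real.rpow_le_rpow_of_exponent_le (by norm_num) (by norm_num)
      linarith
    have hsplit : x = x ^ ((1 : ℝ) / 3) * x ^ ((2 : ℝ) / 3) := by
      rw [← Real.rpow_add hx0]
      norm_num
    have hx13 : (0 : ℝ) < x ^ ((1 : ℝ) / 3) := Real.rpow_pos_of_pos hx0 _
    calc x ^ ((2 : ℝ) / γ) ≤ x ^ ((1 : ℝ) / 3) := h23
      _ ≤ x / (2 * Real.exp 1) := by
          rw [le_div_iff₀ (by positivity)]
          nlinarith [mul_le_mul_of_nonneg_left h2e hx13.le]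
  have hnum : A ^ (x / γ) * x ^ (x / γ) ≤ (x / (2 * Real.exp 1)) ^ n := by
    rw [h1]
    calc (A * x) ^ (x / γ) ≤ (x ^ ((2 : ℝ) / γ)) ^ (x : ℝ) := by
          rw [← h3]; exact h2
      _ ≤ (x / (2 * Real.exp 1)) ^ (x : ℝ) :=
          Real.rpow_le_rpow (Real.rpow_nonneg hx0.le _) hbase hx0.le
      _ = (x / (2 * Real.exp 1)) ^ n := Real.rpow_natCast _ n
  have hstir : ((x / Real.exp 1)) ^ n ≤ (Nat.factorial n : ℝ) :=
    pow_div_exp_le_factorial n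
  have hhalf : (x / (2 * Real.exp 1)) ^ n = (1 / 2 : ℝ) ^ n * (x / Real.exp 1) ^ n := by
    rw [← mul_pow]
    congr 1
    field_simp
  rw [div_le_iff₀ hfac]
  calc A ^ (x / γ) * x ^ (x / γ) ≤ (x / (2 * Real.exp 1)) ^ n := hnum
    _ = (1 / 2 : ℝ) ^ n * (x / Real.exp 1) ^ n := hhalf
    _ ≤ (1 / 2 : ℝ) ^ n * (Nat.factorial n : ℝ) :=
        mul_le_mul_of_nonneg_left hstir (by positivity)

/-- Tail estimate: there is `C₁ > 0` such that for every `A ≥ 1`, with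
`γ = C₁ A`, the tail series `∑_{k ≥ ⌈γ²⌉} A^{k/γ} k^{k/γ} / k!` is at most `1`. -/
theorem exp_tail_le_one :
    ∃ C₁ : ℝ, 0 < C₁ ∧ ∀ A : ℝ, 1 ≤ A →
      ∑' k : ℕ,
          (A ^ ((↑(k + ⌈(C₁ * A) ^ 2⌉₊) : ℝ) / (C₁ * A)) *
              (↑(k + ⌈(C₁ * A) ^ 2⌉₊) : ℝ) ^ ((↑(k + ⌈(C₁ * A) ^ 2⌉₊) : ℝ) / (C₁ * A)) /
            (Nat.factorial (k + ⌈(C₁ * A) ^ 2⌉₊) : ℝ)) ≤ 1 := by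
  refine ⟨6, by norm_num, fun A hA => ?_⟩
  have hA0 : (0 : ℝ) < A := by linarith
  have hγ : (6 : ℝ) ≤ 6 * A := by nlinarith
  have hmγ : (6 * A) ^ 2 ≤ (⌈(6 * A) ^ 2⌉₊ : ℝ) := Nat.le_ceil _
  have hm1 : 1 ≤ ⌈((6 : ℝ) * A) ^ 2⌉₊ := by
    by_contra h0
    push_neg at h0
    have hm0 : ⌈((6 : ℝ) * A) ^ 2⌉₊ = 0 := by omega
    rw [hm0] at hmγ
    push_cast at hmγ
    nlinarith
  have key : ∀ k : ℕ,
      A ^ ((↑(k + ⌈((6:ℝ) * A) ^ 2⌉₊) : ℝ) / (6 * A)) *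
          (↑(k + ⌈((6:ℝ) * A) ^ 2⌉₊) : ℝ) ^ ((↑(k + ⌈((6:ℝ) * A) ^ 2⌉₊) : ℝ) / (6 * A)) /
        (Nat.factorial (k + ⌈((6:ℝ) * A) ^ 2⌉₊) : ℝ) ≤ (1 / 2 : ℝ) ^ (k + 1) := by
    intro k
    have hxm : (⌈((6:ℝ) * A) ^ 2⌉₊ : ℝ) ≤ ((k + ⌈((6:ℝ) * A) ^ 2⌉₊ : ℕ) : ℝ) := by
      exact_mod_cast Nat.le_add_left _ k
    have hγ2x : (6 * A) ^ 2 ≤ ((k + ⌈((6:ℝ) * A) ^ 2⌉₊ : ℕ) : ℝ) := le_trans hmγ hxm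
    have hAx : A ≤ ((k + ⌈((6:ℝ) * A) ^ 2⌉₊ : ℕ) : ℝ) := by nlinarith
    have h := term_bound A (6 * A) (k + ⌈((6:ℝ) * A) ^ 2⌉₊) hA hγ hγ2x hAx
    refine h.trans ?_
    exact pow_le_pow_of_le_one (by norm_num) (by norm_num) (by omega)
  have hgeo : Summable (fun k : ℕ => (1 / 2 : ℝ) ^ (k + 1)) := by
    simp only [pow_succ]
    exact summable_geometric_two.mul_right _
  have hnonneg : ∀ k : ℕ,
      0 ≤ A ^ ((↑(k + ⌈((6:ℝ) * A) ^ 2⌉₊) : ℝ) / (6 * A)) *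
          (↑(k + ⌈((6:ℝ) * A) ^ 2⌉₊) : ℝ) ^ ((↑(k + ⌈((6:ℝ) * A) ^ 2⌉₊) : ℝ) / (6 * A)) /
        (Nat.factorial (k + ⌈((6:ℝ) * A) ^ 2⌉₊) : ℝ) := by
    intro k
    have h1 : (0:ℝ) ≤ A ^ ((↑(k + ⌈((6:ℝ) * A) ^ 2⌉₊) : ℝ) / (6 * A)) :=
      Real.rpow_nonneg hA0.le _
    have h2 : (0:ℝ) ≤ (↑(k + ⌈((6:ℝ) * A) ^ 2⌉₊) : ℝ) ^
        ((↑(k + ⌈((6:ℝ) * A) ^ 2⌉₊) : ℝ) / (6 * A)) :=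
      Real.rpow_nonneg (Nat.cast_nonneg _) _
    positivity
  have hsum := Summable.of_nonneg_of_le hnonneg key hgeo
  calc ∑' k : ℕ, (A ^ ((↑(k + ⌈((6:ℝ) * A) ^ 2⌉₊) : ℝ) / (6 * A)) *
          (↑(k + ⌈((6:ℝ) * A) ^ 2⌉₊) : ℝ) ^ ((↑(k + ⌈((6:ℝ) * A) ^ 2⌉₊) : ℝ) / (6 * A)) /
        (Nat.factorial (k + ⌈((6:ℝ) * A) ^ 2⌉₊) : ℝ))
      ≤ ∑' k : ℕ, (1 / 2 : ℝ) ^ (k + 1) := Summable.tsum_le_tsum key hsum hgeo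
    _ = 1 := by
        simp only [pow_succ]
        rw [tsum_mul_right, tsum_geometric_two]
        norm_num
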